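/- arXiv:2512.06704 — 6 statements merged into one kernel-verified Lean document; each statement's English description precedes it below -/
import Mathlib

section
/- The master-formula λ-bracket is sesquilinear: for all f, g ∈ A, all α ∈ {1,…,D} and all T ∈ ℤ^D, its coefficients satisfy B_T(S_α f, g) = B_{T+E_α}(f, g) and B_T(f, S_α g) = S_α(B_{T−E_α}(f, g)); equivalently, {S_α f _λ g} = λ_α^{−1}{f_λ g} and {f_λ S_α g} = λ_α·S_α({f_λ g}). -/
open MvPolynomial

namespace MPVA

/-- The algebra of difference polynomials in `ℓ` generators on a `D`-dimensional lattice: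
polynomials over `ℂ` in the variables `u^i_N`, `i ∈ Fin ℓ`, `N ∈ ℤ^D`. -/
abbrev A (ℓ D : ℕ) := MvPolynomial (Fin ℓ × (Fin D → ℤ)) ℂ

variable {ℓ D : ℕ}

/-- The shift automorphism `S^M` sending `u^i_N` to `u^i_{N+M}`. -/
noncomputable def Sh (M : Fin D → ℤ) : A ℓ D ≃ₐ[ℂ] A ℓ D :=
  renameEquiv ℂ ((Equiv.refl (Fin ℓ)).prodCongr (Equiv.addRight M))

/-- The `α`-th standard basis vector `E_α ∈ ℤ^D`. -/
def E (α : Fin D) : Fin D → ℤ := fun β => if β = α then 1 else 0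

/-- Coefficient `B_T(f,g)` of `λ^T` in the master-formula λ-bracket `{f_λ g}` determined
by the generator coefficients `{u^i_λ u^j} = Σ_T (P j i T)·λ^T`:
`{f_λ g} = Σ_{i,j,M,N,T'} (∂g/∂u^j_N)·S^N(P^{ji}_{T'})·S^{N+T'−M}(∂f/∂u^i_M)·λ^{N+T'−M}`. -/
noncomputable def B (P : Fin ℓ → Fin ℓ → (Fin D → ℤ) → A ℓ D)
    (T : Fin D → ℤ) (f g : A ℓ D) : A ℓ D :=
  ∑ᶠ (i : Fin ℓ) (j : Fin ℓ) (M : Fin D → ℤ) (N : Fin D → ℤ),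
    (pderiv (j, N) g) * (Sh N (P j i (T - N + M))) * (Sh T (pderiv (i, M) f))

/-- The family of generator coefficients has only finitely many nonzero members. -/
def FinSupp (P : Fin ℓ → Fin ℓ → (Fin D → ℤ) → A ℓ D) : Prop :=
  {x : (Fin ℓ × Fin ℓ) × (Fin D → ℤ) | P x.1.1 x.1.2 x.2 ≠ 0}.Finite

/-- The PVA-Jacobi identity for the triple `(f,g,h)`, written coefficient-wise
(for all `T, U ∈ ℤ^D`, the coefficient of `λ^T μ^U` in
`Σ_U {f_λ B_U(g,h)}μ^U − Σ_T {g_μ B_T(f,h)}λ^T = Σ_{T,U} B_U(B_T(f,g),h)λ^{T+U}μ^U`). -/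
def Jacobi (P : Fin ℓ → Fin ℓ → (Fin D → ℤ) → A ℓ D) (f g h : A ℓ D) : Prop :=
  ∀ T U : Fin D → ℤ,
    B P T f (B P U g h) - B P U g (B P T f h) = B P U (B P (T - U) f g) h

/-!
Shifts commute with partial derivatives up to relabelling the variable,
`∂/∂u^i_M ∘ S^U = S^U ∘ ∂/∂u^i_{M-U}`, and compose additively. Substituting this into the
master formula, both sesquilinearity identities become a translation of one summation index
(`M` for the first argument, `N` for the second) by `U`, which leaves a `finsum` unchanged.
-/

lemma Sh_Sh (U V : Fin D → ℤ) (p : A ℓ D) : Sh U (Sh V p) = Sh (V + U) p := by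
  simp only [Sh, renameEquiv_apply, rename_rename]
  congr 2
  funext ⟨i, N⟩
  simp [add_assoc]

lemma pderiv_Sh (U : Fin D → ℤ) (i : Fin ℓ) (M : Fin D → ℤ) (p : A ℓ D) :
    pderiv (i, M) (Sh U p) = Sh U (pderiv (i, M - U) p) := by
  simpa [Sh] using pderiv_rename
    (f := (Equiv.refl (Fin ℓ)).prodCongr (Equiv.addRight U)) (Equiv.injective _) (i, M - U) p

lemma Sh_finsum {ι : Sort*} (U : Fin D → ℤ) (h : ι → A ℓ D) :
    Sh U (∑ᶠ x, h x) = ∑ᶠ x, Sh U (h x) :=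
  (Sh U).toAddEquiv.map_finsum h

variable (P : Fin ℓ → Fin ℓ → (Fin D → ℤ) → A ℓ D) (T U : Fin D → ℤ) (f g : A ℓ D)

lemma B_Sh_left : B P T (Sh U f) g = B P (T + U) f g := by
  unfold B
  refine finsum_congr fun i => finsum_congr fun j => ?_
  rw [← finsum_comp_equiv (Equiv.addRight U)]
  refine finsum_congr fun M => finsum_congr fun N => ?_
  rw [Equiv.coe_addRight, pderiv_Sh, add_sub_cancel_right, Sh_Sh, add_comm U T,
    add_sub_right_comm T U N, add_assoc _ U M, add_comm U M]

lemma B_Sh_right : B P T f (Sh U g) = Sh U (B P (T - U) f g) := by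
  unfold B
  simp only [Sh_finsum]
  refine finsum_congr fun i => finsum_congr fun j => finsum_congr fun M => ?_
  rw [← finsum_comp_equiv (Equiv.addRight U)]
  refine finsum_congr fun N => ?_
  rw [Equiv.coe_addRight, pderiv_Sh, add_sub_cancel_right, map_mul, map_mul, Sh_Sh, Sh_Sh,
    sub_add_cancel, sub_add_eq_sub_sub, sub_right_comm T N U]

theorem master_sesquilinear_general (ℓ D : ℕ) (P : Fin ℓ → Fin ℓ → (Fin D → ℤ) → A ℓ D)
    (f g : A ℓ D) (α : Fin D) (T : Fin D → ℤ) :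
    B P T (Sh (E α) f) g = B P (T + E α) f g ∧
    B P T f (Sh (E α) g) = Sh (E α) (B P (T - E α) f g) :=
  ⟨B_Sh_left P T (E α) f g, B_Sh_right P T (E α) f g⟩

/-- sesquilinearity of the master-formula λ-bracket:
`B_T(S_α f, g) = B_{T+E_α}(f,g)` and `B_T(f, S_α g) = S_α(B_{T−E_α}(f,g))`. -/
theorem master_sesquilinear (ℓ D : ℕ) (P : Fin ℓ → Fin ℓ → (Fin D → ℤ) → A ℓ D)
    (hP : FinSupp P) (f g : A ℓ D) (α : Fin D) (T : Fin D → ℤ) :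
    B P T (Sh (E α) f) g = B P (T + E α) f g ∧
    B P T f (Sh (E α) g) = Sh (E α) (B P (T - E α) f g) :=
  master_sesquilinear_general ℓ D P f g α T

end MPVA
end

section
/- The master-formula λ-bracket satisfies both Leibniz rules: for all f, g, h ∈ A and T ∈ ℤ^D, B_T(f, gh) = B_T(f,g)·h + B_T(f,h)·g (left Leibniz rule), and B_T(fg, h) = B_T(f,h)·S^T(g) + B_T(g,h)·S^T(f) (right Leibniz rule). -/
/-!
Each summand of the master formula is `∂g/∂u^j_N` times a coefficient independent of `g`, times
`S^T(∂f/∂u^i_M)`. Partial derivatives are derivations and `S^T` is multiplicative, so every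
summand obeys the Leibniz rule in `g` and the `S^T`-twisted Leibniz rule in `f`. Only pairs of
variables occurring in `f` and `g` contribute, so the sums are finite and the rules pass to them.
-/

open MvPolynomial

namespace MPVA

variable {ℓ D : ℕ}

open Function

theorem finsum_eq_finsum_mul_add_finsum_mul {ι R : Type*} [CommSemiring R] {F G H : ι → R}
    (a b : R) (hG : G.HasFiniteSupport) (hH : H.HasFiniteSupport)
    (hF : ∀ x, F x = G x * a + H x * b) :
    ∑ᶠ x, F x = (∑ᶠ x, G x) * a + (∑ᶠ x, H x) * b := by
  rw [finsum_congr hF, finsum_add_distrib (f := fun x => G x * a) (g := fun x => H x * b)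
    (hG.mul_left _) (hH.mul_left _),
    finsum_mul' _ _ hG, finsum_mul' _ _ hH]

/-- The summand of `B` at the pair of variables `v = ((i, M), (j, N))`. -/
noncomputable def bracketTerm (P : Fin ℓ → Fin ℓ → (Fin D → ℤ) → A ℓ D) (T : Fin D → ℤ)
    (f g : A ℓ D) (v : (Fin ℓ × (Fin D → ℤ)) × (Fin ℓ × (Fin D → ℤ))) : A ℓ D :=
  pderiv v.2 g * Sh v.2.2 (P v.2.1 v.1.1 (T - v.2.2 + v.1.2)) * Sh T (pderiv v.1 f)

variable (P : Fin ℓ → Fin ℓ → (Fin D → ℤ) → A ℓ D) (T : Fin D → ℤ)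

theorem support_bracketTerm_subset (f g : A ℓ D) :
    support (bracketTerm P T f g) ⊆ ↑f.vars ×ˢ ↑g.vars := by
  intro v hv
  constructor
  · by_contra hf
    exact hv (by simp [bracketTerm, pderiv_eq_zero_of_notMem_vars hf])
  · by_contra hg
    exact hv (by simp [bracketTerm, pderiv_eq_zero_of_notMem_vars hg])

theorem hasFiniteSupport_bracketTerm (f g : A ℓ D) :
    (bracketTerm P T f g).HasFiniteSupport :=
  (f.vars.finite_toSet.prod g.vars.finite_toSet).subset (support_bracketTerm_subset P T f g)

def indexEquiv : Fin ℓ × Fin ℓ × (Fin D → ℤ) × (Fin D → ℤ) ≃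
    (Fin ℓ × (Fin D → ℤ)) × (Fin ℓ × (Fin D → ℤ)) where
  toFun x := ((x.1, x.2.2.1), (x.2.1, x.2.2.2))
  invFun v := (v.1.1, v.2.1, v.1.2, v.2.2)

theorem B_eq_finsum_bracketTerm (f g : A ℓ D) :
    B P T f g = ∑ᶠ v, bracketTerm P T f g v := by
  have hfin := (hasFiniteSupport_bracketTerm P T f g).comp_of_injective
    (indexEquiv (ℓ := ℓ) (D := D)).injective
  rw [← finsum_comp_equiv indexEquiv,
    finsum_curry (fun x => bracketTerm P T f g (indexEquiv x)) hfin]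
  refine finsum_congr fun i => ?_
  have hfin_i : HasFiniteSupport fun x => bracketTerm P T f g (indexEquiv (i, x)) :=
    hfin.comp_of_injective (g := Prod.mk i) (Prod.mk_right_injective i)
  rw [finsum_curry₃ _ hfin_i]
  rfl

theorem bracketTerm_mul_right (f g h : A ℓ D) (v) :
    bracketTerm P T f (g * h) v = bracketTerm P T f g v * h + bracketTerm P T f h v * g := by
  simp only [bracketTerm, pderiv_mul]
  ring

theorem bracketTerm_mul_left (f g h : A ℓ D) (v) :
    bracketTerm P T (f * g) h v =
      bracketTerm P T f h v * Sh T g + bracketTerm P T g h v * Sh T f := by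
  simp only [bracketTerm, pderiv_mul, map_add, map_mul]
  ring

theorem B_mul_right (f g h : A ℓ D) : B P T f (g * h) = B P T f g * h + B P T f h * g := by
  simp only [B_eq_finsum_bracketTerm]
  exact finsum_eq_finsum_mul_add_finsum_mul _ _ (hasFiniteSupport_bracketTerm P T f g)
    (hasFiniteSupport_bracketTerm P T f h) (bracketTerm_mul_right P T f g h)

theorem B_mul_left (f g h : A ℓ D) :
    B P T (f * g) h = B P T f h * Sh T g + B P T g h * Sh T f := by
  simp only [B_eq_finsum_bracketTerm]
  exact finsum_eq_finsum_mul_add_finsum_mul _ _ (hasFiniteSupport_bracketTerm P T f h)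
    (hasFiniteSupport_bracketTerm P T g h) (bracketTerm_mul_left P T f g h)

theorem master_leibniz_general (ℓ D : ℕ) (P : Fin ℓ → Fin ℓ → (Fin D → ℤ) → A ℓ D)
    (f g h : A ℓ D) (T : Fin D → ℤ) :
    B P T f (g * h) = B P T f g * h + B P T f h * g ∧
    B P T (f * g) h = B P T f h * Sh T g + B P T g h * Sh T f :=
  ⟨B_mul_right P T f g h, B_mul_left P T f g h⟩

/-- both Leibniz rules for the master-formula λ-bracket:
`B_T(f,gh) = B_T(f,g)h + B_T(f,h)g` and `B_T(fg,h) = B_T(f,h)S^T(g) + B_T(g,h)S^T(f)`. -/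
theorem master_leibniz (ℓ D : ℕ) (P : Fin ℓ → Fin ℓ → (Fin D → ℤ) → A ℓ D)
    (hP : FinSupp P) (f g h : A ℓ D) (T : Fin D → ℤ) :
    B P T f (g * h) = B P T f g * h + B P T f h * g ∧
    B P T (f * g) h = B P T f h * Sh T g + B P T g h * Sh T f :=
  master_leibniz_general ℓ D P f g h T

end MPVA
end

section
/- Let {·_λ·} be a λ-bracket on A which is skewsymmetric and satisfies the PVA-Jacobi identity for all triples of elements of A. For h ∈ A define X_{∫h} : A → A by X_{∫h}(f) := {h, f}. Then: (i) X_{∫h} depends only on the class ∫h ∈ F (if h − h' ∈ (S₁−1)A + ⋯ + (S_D−1)A then {h, f} = {h', f} for all f); (ii) X_{∫h} is a derivation of A commuting with each shift S_α; and (iii) the map ∫h ↦ X_{∫h} is a Lie algebra morphism: X_{{∫f, ∫g}} = X_{∫f}∘X_{∫g} − X_{∫g}∘X_{∫f}. -/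
/-!
Each of the four properties is read off the axioms of the λ-bracket by evaluating at `λ = 1`:
sesquilinearity in the first slot makes `B_T(S_α x, p)` a reindexing of `B_T(x, p)`, so
total differences are killed; the left Leibniz rule gives the derivation property;
sesquilinearity in the second slot gives shift-equivariance. For the Lie property, substitute
`T ↦ T - U` in `Σ_{T,U} B_U(B_T(f,g), p)` so that the PVA-Jacobi identity applies termwise, and
exchange the two (finite) summations.
-/

open MvPolynomial

namespace MPVA

variable {ℓ D : ℕ}

/-- Membership in `(S₁−1)A + ⋯ + (S_D−1)A` (so `∫x = 0` in the space of local
functionals `F = A/((S₁−1)A + ⋯ + (S_D−1)A)`). -/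
def InShiftIdeal (x : A ℓ D) : Prop :=
  ∃ h : Fin D → A ℓ D, x = ∑ α : Fin D, (Sh (E α) (h α) - h α)

/-- A λ-bracket on `A`, presented through its coefficients: `{f_λ g} = Σ_T (B T f g)·λ^T`. -/
structure IsLambdaBracket (B : (Fin D → ℤ) → A ℓ D → A ℓ D → A ℓ D) : Prop where
  add_left : ∀ (T : Fin D → ℤ) (f₁ f₂ g : A ℓ D), B T (f₁ + f₂) g = B T f₁ g + B T f₂ g
  smul_left : ∀ (T : Fin D → ℤ) (c : ℂ) (f g : A ℓ D), B T (c • f) g = c • B T f g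
  add_right : ∀ (T : Fin D → ℤ) (f g₁ g₂ : A ℓ D), B T f (g₁ + g₂) = B T f g₁ + B T f g₂
  smul_right : ∀ (T : Fin D → ℤ) (c : ℂ) (f g : A ℓ D), B T f (c • g) = c • B T f g
  finite : ∀ f g : A ℓ D, (Function.support fun T => B T f g).Finite
  sesqui_left : ∀ (T : Fin D → ℤ) (α : Fin D) (f g : A ℓ D),
    B T (Sh (E α) f) g = B (T + E α) f g
  sesqui_right : ∀ (T : Fin D → ℤ) (α : Fin D) (f g : A ℓ D),
    B T f (Sh (E α) g) = Sh (E α) (B (T - E α) f g)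
  leibniz_left : ∀ (T : Fin D → ℤ) (f g h : A ℓ D),
    B T f (g * h) = B T f g * h + B T f h * g
  leibniz_right : ∀ (T : Fin D → ℤ) (f g h : A ℓ D),
    B T (f * g) h = B T f h * Sh T g + B T g h * Sh T f

/-- Skewsymmetry of the λ-bracket: `B_{−T}(g,f) = −S^{−T}(B_T(f,g))`. -/
def IsSkew (B : (Fin D → ℤ) → A ℓ D → A ℓ D → A ℓ D) : Prop :=
  ∀ (f g : A ℓ D) (T : Fin D → ℤ), B (-T) g f = - Sh (-T) (B T f g)

/-- The PVA-Jacobi identity, coefficient-wise in `λ^T μ^U`. -/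
def IsJacobi (B : (Fin D → ℤ) → A ℓ D → A ℓ D → A ℓ D) : Prop :=
  ∀ (f g h : A ℓ D) (T U : Fin D → ℤ),
    B T f (B U g h) - B U g (B T f h) = B U (B (T - U) f g) h

/-- The bracket `{f,g} := {f_λ g}|_{λ=1} = Σ_T B_T(f,g)`. -/
noncomputable def br (B : (Fin D → ℤ) → A ℓ D → A ℓ D → A ℓ D) (f g : A ℓ D) : A ℓ D :=
  ∑ᶠ T : Fin D → ℤ, B T f g

theorem finsum_comm {M α β : Type*} [AddCommMonoid M] (F : α → β → M)
    (h : (Function.support (Function.uncurry F)).Finite) :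
    ∑ᶠ a, ∑ᶠ b, F a b = ∑ᶠ b, ∑ᶠ a, F a b := by
  have h' : (Function.support fun q : β × α => F q.2 q.1).Finite :=
    h.preimage Prod.swap_injective.injOn
  calc ∑ᶠ a, ∑ᶠ b, F a b = ∑ᶠ q : α × β, F q.1 q.2 := (finsum_curry _ h).symm
    _ = ∑ᶠ q : β × α, F q.2 q.1 := (finsum_comp_equiv (Equiv.prodComm β α)).symm
    _ = ∑ᶠ b, ∑ᶠ a, F a b := finsum_curry _ h'

namespace IsLambdaBracket

variable {B : (Fin D → ℤ) → A ℓ D → A ℓ D → A ℓ D} (hB : IsLambdaBracket B)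
include hB

noncomputable def addHomLeft (T : Fin D → ℤ) (g : A ℓ D) : A ℓ D →+ A ℓ D :=
  AddMonoidHom.mk' (B T · g) (hB.add_left T · · g)

noncomputable def addHomRight (T : Fin D → ℤ) (f : A ℓ D) : A ℓ D →+ A ℓ D :=
  AddMonoidHom.mk' (B T f) (hB.add_right T f)

theorem map_zero_right (T : Fin D → ℤ) (f : A ℓ D) : B T f 0 = 0 :=
  (hB.addHomRight T f).map_zero

theorem map_finsum_left {ι : Type*} {x : ι → A ℓ D} (hx : (Function.support x).Finite)
    (T : Fin D → ℤ) (g : A ℓ D) : B T (∑ᶠ i, x i) g = ∑ᶠ i, B T (x i) g :=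
  (hB.addHomLeft T g).map_finsum hx

theorem map_finsum_right {ι : Type*} {x : ι → A ℓ D} (hx : (Function.support x).Finite)
    (T : Fin D → ℤ) (f : A ℓ D) : B T f (∑ᶠ i, x i) = ∑ᶠ i, B T f (x i) :=
  (hB.addHomRight T f).map_finsum hx

theorem br_add_left (x y p : A ℓ D) : br B (x + y) p = br B x p + br B y p := by
  simp only [br, hB.add_left]
  exact finsum_add_distrib (hB.finite x p) (hB.finite y p)

noncomputable def brAddHomLeft (p : A ℓ D) : A ℓ D →+ A ℓ D :=
  AddMonoidHom.mk' (br B · p) (hB.br_add_left · · p)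

theorem br_sub_left (x y p : A ℓ D) : br B (x - y) p = br B x p - br B y p :=
  (hB.brAddHomLeft p).map_sub x y

theorem br_zero_right (f : A ℓ D) : br B f 0 = 0 := by
  simp only [br, hB.map_zero_right, finsum_zero]

theorem br_shift_left (α : Fin D) (x p : A ℓ D) : br B (Sh (E α) x) p = br B x p := by
  simp only [br, hB.sesqui_left]
  exact finsum_comp_equiv (Equiv.addRight (E α)) (f := fun T => B T x p)

theorem br_eq_zero_of_inShiftIdeal {x : A ℓ D} (hx : InShiftIdeal x) (p : A ℓ D) :
    br B x p = 0 := by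
  obtain ⟨w, rfl⟩ := hx
  refine (map_sum (hB.brAddHomLeft p) _ _).trans (Finset.sum_eq_zero fun α _ => ?_)
  exact (hB.br_sub_left _ _ p).trans (sub_eq_zero.mpr (hB.br_shift_left α (w α) p))

theorem br_eq_of_inShiftIdeal_sub {h h' : A ℓ D} (hh' : InShiftIdeal (h - h')) (f : A ℓ D) :
    br B h f = br B h' f :=
  sub_eq_zero.mp ((hB.br_sub_left h h' f).symm.trans (hB.br_eq_zero_of_inShiftIdeal hh' f))

theorem br_mul_right (h f g : A ℓ D) : br B h (f * g) = br B h f * g + f * br B h g := by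
  simp only [br, hB.leibniz_left]
  rw [finsum_add_distrib ((hB.finite h f).subset (Function.support_mul_subset_left _ _))
    ((hB.finite h g).subset (Function.support_mul_subset_left _ _)), ← finsum_mul, ← finsum_mul,
    mul_comm f]

theorem br_shift_right (h f : A ℓ D) (α : Fin D) :
    br B h (Sh (E α) f) = Sh (E α) (br B h f) := by
  simp only [br, hB.sesqui_right, AddEquivClass.map_finsum]
  exact finsum_comp_equiv (Equiv.subRight (E α)) (f := fun T => Sh (E α) (B T h f))

theorem finite_support_nested_right (f g p : A ℓ D) :
    (Function.support fun q : (Fin D → ℤ) × (Fin D → ℤ) => B q.2 f (B q.1 g p)).Finite := by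
  refine ((hB.finite g p).prod
    ((hB.finite g p).biUnion fun U _ => hB.finite f (B U g p))).subset ?_
  rintro ⟨U, T⟩ hUT
  have hU : B U g p ≠ 0 := fun h0 => hUT (by simp only [h0, hB.map_zero_right])
  exact ⟨hU, Set.mem_biUnion hU hUT⟩

theorem br_br_left (hjac : IsJacobi B) (f g p : A ℓ D) :
    br B (br B f g) p = br B f (br B g p) - br B g (br B f p) := by
  have hexpand : br B f (br B g p) = ∑ᶠ U, br B f (B U g p) :=
    calc br B f (br B g p) = ∑ᶠ T, ∑ᶠ U, B T f (B U g p) :=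
          finsum_congr fun T => hB.map_finsum_right (hB.finite g p) T f
      _ = ∑ᶠ U, br B f (B U g p) := (finsum_comm _ (hB.finite_support_nested_right f g p)).symm
  calc br B (br B f g) p = ∑ᶠ U, ∑ᶠ T, B U (B (T - U) f g) p := finsum_congr fun U => by
        rw [br, hB.map_finsum_left (hB.finite f g)]
        exact (finsum_comp_equiv (Equiv.subRight U) (f := fun T => B U (B T f g) p)).symm
    _ = ∑ᶠ U, (br B f (B U g p) - B U g (br B f p)) := finsum_congr fun U => by
        rw [← finsum_congr fun T => hjac f g p T U, finsum_sub_distrib (hB.finite f _)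
          (Function.HasFiniteSupport.fun_comp (hB.finite f p) (hB.map_zero_right U g)),
          ← hB.map_finsum_right (hB.finite f p)]
        rfl
    _ = br B f (br B g p) - br B g (br B f p) := by
        rw [finsum_sub_distrib
          (Function.HasFiniteSupport.fun_comp (hB.finite g p) (hB.br_zero_right f))
          (hB.finite g _), hexpand]
        rfl

end IsLambdaBracket

theorem hamiltonian_vector_fields_general (ℓ D : ℕ)
    (B : (Fin D → ℤ) → A ℓ D → A ℓ D → A ℓ D) (hB : IsLambdaBracket B)
    (hjac : IsJacobi B) :
    (∀ h h' : A ℓ D, InShiftIdeal (h - h') → ∀ f : A ℓ D, br B h f = br B h' f) ∧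
    (∀ h f g : A ℓ D, br B h (f * g) = br B h f * g + f * br B h g) ∧
    (∀ (h f : A ℓ D) (α : Fin D), br B h (Sh (E α) f) = Sh (E α) (br B h f)) ∧
    (∀ f g p : A ℓ D,
      br B (br B f g) p = br B f (br B g p) - br B g (br B f p)) :=
  ⟨fun _ _ => hB.br_eq_of_inShiftIdeal_sub, hB.br_mul_right, hB.br_shift_right, hB.br_br_left hjac⟩

/-- for a skewsymmetric λ-bracket satisfying the PVA-Jacobi identity, the
Hamiltonian vector field `X_{∫h}(f) := {h,f}` (i) depends only on `∫h`, (ii) is a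
derivation of `A` commuting with all shifts `S_α`, and (iii) `∫h ↦ X_{∫h}` is a Lie
algebra morphism: `X_{{∫f,∫g}} = X_{∫f}∘X_{∫g} − X_{∫g}∘X_{∫f}`. -/
theorem hamiltonian_vector_fields (ℓ D : ℕ)
    (B : (Fin D → ℤ) → A ℓ D → A ℓ D → A ℓ D) (hB : IsLambdaBracket B)
    (hskew : IsSkew B) (hjac : IsJacobi B) :
    (∀ h h' : A ℓ D, InShiftIdeal (h - h') → ∀ f : A ℓ D, br B h f = br B h' f) ∧
    (∀ h f g : A ℓ D, br B h (f * g) = br B h f * g + f * br B h g) ∧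
    (∀ (h f : A ℓ D) (α : Fin D), br B h (Sh (E α) f) = Sh (E α) (br B h f)) ∧
    (∀ f g p : A ℓ D,
      br B (br B f g) p = br B f (br B g p) - br B g (br B f p)) :=
  hamiltonian_vector_fields_general ℓ D B hB hjac

end MPVA
end

section
/- Let f, g ∈ A be nonzero, and consider the master-formula λ-bracket of the scalar two-dimensional first-order operator, i.e. with generator coefficients P_{(1,0)} = f, P_{(0,1)} = g, P_{(−1,0)} = −S₁^{−1}(f), P_{(0,−1)} = −S₂^{−1}(g), and P_T = 0 for all other T ∈ ℤ². If this λ-bracket satisfies the PVA-Jacobi identity for the triple (u, u, u), then ∂f/∂u_{mn} = 0 for every (m,n) ∉ {(0,0), (1,0)} and ∂g/∂u_{mn} = 0 for every (m,n) ∉ {(0,0), (0,1)}; that is, f depends only on u and u_{10}, and g depends only on u and u_{01}. -/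
/-!
Fix `T, U` with `P_T = P_{T-U} = 0`. Since `B_V(u, u) = P_V`, the Jacobi identity for
`(u, u, u)` at `λ^T μ^U` collapses to `B_T(u, P_U) = Σ_N ∂P_U/∂u_N · S^N P_{T-N} = 0`.
Let `φ` be a linear functional on `ℤ^D` with a unique maximiser `d` on the support of `P`,
and let `N` maximise `φ` over the variables on which `P_U` depends. Then the only surviving
term of `B_{N+d}(u, P_U)` is `∂P_U/∂u_N · S^N P_d ≠ 0`, so `N + d` or `N + d - U` must lie in
the support of `P`, which forces `φ N ≤ max 0 (φ U)`. For the first-order operator the support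
is `{±E₁, ±E₂}`; taking `φ = ±` the coordinates and `U = E₁` (`P_U = f`) or `U = E₂`
(`P_U = g`) confines the variables of `f` and `g` to the stated sets.
-/

open MvPolynomial

namespace MPVA

variable {ℓ D : ℕ}

/-- For `D = 2`: the lattice point `(m,n) ∈ ℤ²`. -/
def v (m n : ℤ) : Fin 2 → ℤ := ![m, n]

/-- For `D = 2`, `ℓ = 1`: the variable `u_{mn}` of the scalar two-dimensional algebra. -/
noncomputable def uu (m n : ℤ) : A 1 2 := X ((0 : Fin 1), v m n)

/-- Generator coefficients of the scalar two-dimensional first-order operator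
`P = f·S₁ + g·S₂ − S₂^{−1}∘g − S₁^{−1}∘f`. -/
noncomputable def P1 (f g : A 1 2) : Fin 1 → Fin 1 → (Fin 2 → ℤ) → A 1 2 :=
  fun _ _ T =>
    if T = v 1 0 then f
    else if T = v 0 1 then g
    else if T = v (-1) 0 then -(Sh (v (-1) 0) f)
    else if T = v 0 (-1) then -(Sh (v 0 (-1)) g)
    else 0

lemma Sh_zero (p : A ℓ D) : Sh 0 p = p := by
  simp [Sh]

lemma finite_setOf_pderiv_ne_zero (i : Fin ℓ) (p : A ℓ D) :
    {N | pderiv (i, N) p ≠ 0}.Finite := by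
  refine (p.vars.finite_toSet.preimage (Prod.mk_right_injective i).injOn).subset ?_
  intro N hN
  by_contra hvars
  exact hN (pderiv_eq_zero_of_notMem_vars hvars)

lemma B_zero_left (P : Fin ℓ → Fin ℓ → (Fin D → ℤ) → A ℓ D) (T : Fin D → ℤ) (h : A ℓ D) :
    B P T 0 h = 0 := by
  simp [B]

lemma B_zero_right (P : Fin ℓ → Fin ℓ → (Fin D → ℤ) → A ℓ D) (T : Fin D → ℤ) (h : A ℓ D) :
    B P T h 0 = 0 := by
  simp [B]

section Scalar

variable (P : Fin 1 → Fin 1 → (Fin D → ℤ) → A 1 D)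

lemma B_X_left (T : Fin D → ℤ) (h : A 1 D) :
    B P T (X (0, 0)) h = ∑ᶠ N, pderiv (0, N) h * Sh N (P 0 0 (T - N)) := by
  simp only [B, finsum_unique, Fin.default_eq_zero]
  rw [finsum_eq_single _ 0 fun M hM => ?_]
  · simp
  · simp [pderiv_X, hM]

lemma B_X_X (T : Fin D → ℤ) : B P T (X (0, 0)) (X (0, 0)) = P 0 0 T := by
  rw [B_X_left, finsum_eq_single _ 0 fun N hN => ?_]
  · simp [Sh_zero]
  · simp [pderiv_X, Ne.symm hN]

lemma B_X_eq_zero_of_jacobi (hJ : Jacobi P (X (0, 0)) (X (0, 0)) (X (0, 0)))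
    {T U : Fin D → ℤ} (hT : P 0 0 T = 0) (hTU : P 0 0 (T - U) = 0) :
    B P T (X (0, 0)) (P 0 0 U) = 0 := by
  simpa [Jacobi, B_X_X, hT, hTU, B_zero_left, B_zero_right] using hJ T U

variable {P} (φ : (Fin D → ℤ) →+ ℤ) {d : Fin D → ℤ}

lemma P_eq_zero_of_lt (hdmax : ∀ W ≠ d, P 0 0 W ≠ 0 → φ W < φ d) {W : Fin D → ℤ}
    (hW : φ d < φ W) : P 0 0 W = 0 := by
  by_contra hPW
  have hWd : W ≠ d := by rintro rfl; exact lt_irrefl _ hW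
  exact lt_asymm hW (hdmax W hWd hPW)

lemma B_X_ne_zero_of_isMax (hd : P 0 0 d ≠ 0) (hdmax : ∀ W ≠ d, P 0 0 W ≠ 0 → φ W < φ d)
    {h : A 1 D} {N : Fin D → ℤ} (hN : pderiv (0, N) h ≠ 0)
    (hNmax : ∀ N', pderiv (0, N') h ≠ 0 → φ N' ≤ φ N) :
    B P (N + d) (X (0, 0)) h ≠ 0 := by
  rw [B_X_left, finsum_eq_single _ N fun N' hN' => ?_]
  · rw [add_sub_cancel_left]
    exact mul_ne_zero hN ((map_ne_zero_iff _ (Sh N).injective).mpr hd)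
  · by_cases hN'h : pderiv (0, N') h = 0
    · rw [hN'h, zero_mul]
    · by_cases hP : P 0 0 (N + d - N') = 0
      · rw [hP, map_zero, mul_zero]
      · have hne : N + d - N' ≠ d := fun heq => hN' (by
          rw [add_sub_right_comm, add_eq_right, sub_eq_zero] at heq
          exact heq.symm)
        have hlt := hdmax _ hne hP
        simp only [map_sub, map_add] at hlt
        linarith [hNmax N' hN'h]

theorem le_max_of_pderiv_ne_zero (hJ : Jacobi P (X (0, 0)) (X (0, 0)) (X (0, 0)))
    (hd : P 0 0 d ≠ 0) (hdmax : ∀ W ≠ d, P 0 0 W ≠ 0 → φ W < φ d)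
    {U N : Fin D → ℤ} (hN : pderiv (0, N) (P 0 0 U) ≠ 0) : φ N ≤ max 0 (φ U) := by
  by_contra! hlarge
  obtain ⟨Nm, hNm, hmax⟩ := Set.exists_max_image _ φ (finite_setOf_pderiv_ne_zero 0 _) ⟨N, hN⟩
  have hNmU : max 0 (φ U) < φ Nm := hlarge.trans_le (hmax N hN)
  refine B_X_ne_zero_of_isMax φ hd hdmax hNm hmax (B_X_eq_zero_of_jacobi P hJ ?_ ?_)
  · refine P_eq_zero_of_lt φ hdmax ?_
    rw [map_add]
    linarith [le_max_left 0 (φ U)]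
  · refine P_eq_zero_of_lt φ hdmax ?_
    rw [map_sub, map_add]
    linarith [le_max_right 0 (φ U)]

end Scalar

section FirstOrder

variable {f g : A 1 2}

lemma uu_zero_zero : uu 0 0 = X (0, 0) := by
  rw [uu, show v 0 0 = 0 from funext fun i => by fin_cases i <;> rfl]

@[simp] lemma P1_v_one_zero : P1 f g 0 0 (v 1 0) = f := by simp [P1]

@[simp] lemma P1_v_zero_one : P1 f g 0 0 (v 0 1) = g := by simp [P1, v]

@[simp] lemma P1_v_neg_one_zero : P1 f g 0 0 (v (-1) 0) = -Sh (v (-1) 0) f := by simp [P1, v]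

@[simp] lemma P1_v_zero_neg_one : P1 f g 0 0 (v 0 (-1)) = -Sh (v 0 (-1)) g := by simp [P1, v]

lemma P1_support {W : Fin 2 → ℤ} (hW : P1 f g 0 0 W ≠ 0) :
    W = v 1 0 ∨ W = v 0 1 ∨ W = v (-1) 0 ∨ W = v 0 (-1) := by
  by_contra! hW'
  simp [P1, hW'] at hW

lemma P1_coord_bounds (hf : f ≠ 0) (hg : g ≠ 0)
    (hJ : Jacobi (P1 f g) (X (0, 0)) (X (0, 0)) (X (0, 0)))
    {U N : Fin 2 → ℤ} (hN : pderiv (0, N) (P1 f g 0 0 U) ≠ 0) :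
    N 0 ≤ max 0 (U 0) ∧ -N 0 ≤ max 0 (-U 0) ∧ N 1 ≤ max 0 (U 1) ∧ -N 1 ≤ max 0 (-U 1) := by
  refine ⟨le_max_of_pderiv_ne_zero (Pi.evalAddMonoidHom _ 0) hJ (d := v 1 0)
      (by simpa using hf) ?_ hN,
    le_max_of_pderiv_ne_zero (-Pi.evalAddMonoidHom _ 0) hJ (d := v (-1) 0)
      (by simpa using hf) ?_ hN,
    le_max_of_pderiv_ne_zero (Pi.evalAddMonoidHom _ 1) hJ (d := v 0 1)
      (by simpa using hg) ?_ hN,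
    le_max_of_pderiv_ne_zero (-Pi.evalAddMonoidHom _ 1) hJ (d := v 0 (-1))
      (by simpa using hg) ?_ hN⟩
  all_goals
    intro W hWd hW
    rcases P1_support hW with rfl | rfl | rfl | rfl <;> simp_all [v]

end FirstOrder

/-- if the λ-bracket of the first-order operator satisfies the PVA-Jacobi
identity for `(u,u,u)`, then `f = f(u,u_{10})` and `g = g(u,u_{01})`. -/
theorem first_order_coefficient_dependence (f g : A 1 2) (hf : f ≠ 0) (hg : g ≠ 0)
    (hJ : Jacobi (P1 f g) (uu 0 0) (uu 0 0) (uu 0 0)) :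
    (∀ m n : ℤ, ¬(m = 0 ∧ n = 0) → ¬(m = 1 ∧ n = 0) →
      pderiv ((0 : Fin 1), v m n) f = 0) ∧
    (∀ m n : ℤ, ¬(m = 0 ∧ n = 0) → ¬(m = 0 ∧ n = 1) →
      pderiv ((0 : Fin 1), v m n) g = 0) := by
  rw [uu_zero_zero] at hJ
  refine ⟨fun m n h00 h10 => ?_, fun m n h00 h01 => ?_⟩ <;> by_contra hmn
  · have := P1_coord_bounds hf hg hJ (U := v 1 0) (by rwa [P1_v_one_zero])
    simp only [v, Matrix.cons_val_zero, Matrix.cons_val_one] at this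
    omega
  · have := P1_coord_bounds hf hg hJ (U := v 0 1) (by rwa [P1_v_zero_one])
    simp only [v, Matrix.cons_val_zero, Matrix.cons_val_one] at this
    omega

end MPVA
end

section
/- Let f : ℝ × ℝ → ℝ be continuously differentiable and nowhere vanishing, and suppose that f(x,y)·∂₂f(w,x) = f(w,x)·∂₁f(x,y) for all w, x, y ∈ ℝ, where ∂₁ and ∂₂ denote the partial derivatives with respect to the first and second argument. Then there exist a nonzero constant c ∈ ℝ and a continuously differentiable nowhere-vanishing function φ : ℝ → ℝ such that f(x,y) = c·φ(x)·φ(y) for all x, y ∈ ℝ. -/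
/-!
With `w = 0` the equation says that the logarithmic derivative of `x ↦ f (x, y)` is that of
`x ↦ f (0, x)`, whatever `y` is. Nowhere-vanishing functions on `ℝ` with equal logarithmic
derivatives are proportional, so `f (x, y) = a y · f (0, x)`; putting `x = 0` gives
`a y = f (0, y) / f (0, 0)`, i.e. the factorisation with `φ = f (0, ·)` and `c = f (0, 0)⁻¹`.
-/

open Set

theorem mul_eq_mul_of_logDeriv_eq {𝕜 𝕜' : Type*} [NontriviallyNormedField 𝕜]
    [IsRCLikeNormedField 𝕜] [NontriviallyNormedField 𝕜'] [NormedAlgebra 𝕜 𝕜'] {u v : 𝕜 → 𝕜'}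
    (hu : Differentiable 𝕜 u) (hv : Differentiable 𝕜 v) (hu0 : ∀ x, u x ≠ 0)
    (hv0 : ∀ x, v x ≠ 0) (h : logDeriv u = logDeriv v) (x a : 𝕜) :
    u x * v a = u a * v x := by
  obtain ⟨z, -, hz⟩ := (logDeriv_eqOn_iff hu.differentiableOn hv.differentiableOn isOpen_univ
    isPreconnected_univ (fun t _ => hv0 t) (fun t _ => hu0 t)).1 (fun t _ => congrFun h t)
  rw [hz (mem_univ x), hz (mem_univ a), Pi.smul_apply, Pi.smul_apply, smul_eq_mul, smul_eq_mul]
  ring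

theorem logDeriv_slice_eq_logDeriv_zero_slice {𝕜 𝕜' : Type*} [NontriviallyNormedField 𝕜]
    [NontriviallyNormedField 𝕜'] [NormedAlgebra 𝕜 𝕜'] {f : 𝕜 × 𝕜 → 𝕜'} (hf0 : ∀ p, f p ≠ 0)
    (heq : ∀ x y : 𝕜,
      f (x, y) * deriv (fun t => f (0, t)) x = f (0, x) * deriv (fun t => f (t, y)) x)
    (y : 𝕜) : logDeriv (fun t => f (t, y)) = logDeriv (fun t => f (0, t)) := by
  ext x
  rw [logDeriv_apply, logDeriv_apply, div_eq_div_iff (hf0 _) (hf0 _)]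
  linear_combination -heq x y

/-- a continuously differentiable, nowhere vanishing `f : ℝ × ℝ → ℝ`
satisfying `f(x,y)·∂₂f(w,x) = f(w,x)·∂₁f(x,y)` for all `w,x,y` factors as
`f(x,y) = c·φ(x)·φ(y)` with `c ≠ 0` and `φ` continuously differentiable and nowhere
vanishing. Here `∂₁f(a,b) = d/dt f(t,b)|_{t=a}` and `∂₂f(a,b) = d/dt f(a,t)|_{t=b}`. -/
theorem first_order_coefficient_factors (f : ℝ × ℝ → ℝ)
    (hf : ContDiff ℝ 1 f) (hf0 : ∀ p : ℝ × ℝ, f p ≠ 0)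
    (heq : ∀ w x y : ℝ,
      f (x, y) * deriv (fun t => f (w, t)) x = f (w, x) * deriv (fun t => f (t, y)) x) :
    ∃ (c : ℝ) (φ : ℝ → ℝ), c ≠ 0 ∧ ContDiff ℝ 1 φ ∧ (∀ x : ℝ, φ x ≠ 0) ∧
      ∀ x y : ℝ, f (x, y) = c * φ x * φ y := by
  have hfd : Differentiable ℝ f := hf.differentiable one_ne_zero
  have hsep (x y : ℝ) : f (x, y) * f (0, 0) = f (0, y) * f (0, x) :=
    mul_eq_mul_of_logDeriv_eq (by fun_prop) (by fun_prop) (fun _ => hf0 _) (fun _ => hf0 _)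
      (logDeriv_slice_eq_logDeriv_zero_slice hf0 (heq 0) y) x 0
  refine ⟨(f (0, 0))⁻¹, fun x => f (0, x), inv_ne_zero (hf0 _), hf.comp (by fun_prop),
    fun _ => hf0 _, fun x y => ?_⟩
  field_simp [hf0 (0, 0)]
  linear_combination hsep x y
end

section
/- Let f : ℝ → ℝ be continuously differentiable and nowhere vanishing, let F : ℝ → ℝ be continuously differentiable with f(x)·F'(x) = a·F(x) for all x, where a ≠ 0 is a constant, and let G : ℝ² → ℝ be continuously differentiable. Suppose G satisfies, for all x, y ∈ ℝ: (i) a·f(x)·F(x)·f(y) = f(x)·∂₁G(x,y) − f'(x)·G(x,y), and (ii) the function A(y) := G(x,y)/f(x) − f(y)F(x) (which by (i) is independent of x) satisfies f(y)·A'(y) − A(y)·f'(y) = a·f(y)·F(y) for all y. Then there exists a constant c ∈ ℝ such that G(x,y) = f(x)·f(y)·(F(x) + F(y) + c) for all x, y ∈ ℝ. -/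
/-! Both conditions are first-order linear ODEs of the same shape: if `f u' - u f' = c·a·f·F`,
then `(u / f - c F)' = c (a F / f - F') = 0`, so `u = f (c F + k)`. Applied in `y` to
`A(y) = G(0,y)/f(0) - f(y)F(0)` with `c = 1` this determines `A`; applied in `x` to `G(·,y)`
with `c = f(y)` it gives `G(x,y) = f(x) (f(y) F(x) + A(y))`. -/

theorem exists_eq_mul_of_wronskian_eq {a c : ℝ} {f F u : ℝ → ℝ}
    (hf : Differentiable ℝ f) (hf0 : ∀ x, f x ≠ 0) (hF : Differentiable ℝ F)
    (hfF : ∀ x, f x * deriv F x = a * F x) (hu : Differentiable ℝ u)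
    (hwu : ∀ x, f x * deriv u x - u x * deriv f x = c * (a * f x * F x)) :
    ∃ k, ∀ x, u x = f x * (c * F x + k) := by
  have hderiv : ∀ x, HasDerivAt (fun t => u t / f t - c * F t) 0 x := by
    intro x
    refine (((hu x).hasDerivAt.div (hf x).hasDerivAt (hf0 x)).sub
      ((hF x).hasDerivAt.const_mul c)).congr_deriv ?_
    have hF' : deriv F x = a * F x / f x := by
      rw [eq_div_iff (hf0 x), mul_comm, hfF]
    rw [hF', sub_eq_zero, div_eq_iff (pow_ne_zero 2 (hf0 x))]
    field_simp
    linear_combination hwu x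
  refine ⟨u 0 / f 0 - c * F 0, fun x => ?_⟩
  rw [← is_const_of_deriv_eq_zero (fun t => (hderiv t).differentiableAt)
    (fun t => (hderiv t).deriv) x 0]
  field_simp [hf0 x]
  ring

theorem second_order_G1_determined_general (a : ℝ) (f F : ℝ → ℝ)
    (hf : ContDiff ℝ 1 f) (hf0 : ∀ x : ℝ, f x ≠ 0)
    (hF : ContDiff ℝ 1 F) (hfF : ∀ x : ℝ, f x * deriv F x = a * F x)
    (G : ℝ × ℝ → ℝ) (hG : ContDiff ℝ 1 G)
    (h1 : ∀ x y : ℝ,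
      a * f x * F x * f y = f x * deriv (fun t => G (t, y)) x - deriv f x * G (x, y))
    (h2 : ∀ x y : ℝ,
      f y * deriv (fun t => G (x, t) / f x - f t * F x) y
        - (G (x, y) / f x - f y * F x) * deriv f y = a * f y * F y) :
    ∃ c : ℝ, ∀ x y : ℝ, G (x, y) = f x * f y * (F x + F y + c) := by
  have hf' := hf.differentiable one_ne_zero
  have hF' := hF.differentiable one_ne_zero
  have hG' := hG.differentiable one_ne_zero
  set A : ℝ → ℝ := fun t => G (0, t) / f 0 - f t * F 0 with hA
  obtain ⟨c, hc⟩ : ∃ c, ∀ y, A y = f y * (1 * F y + c) :=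
    exists_eq_mul_of_wronskian_eq hf' hf0 hF' hfF
      ((hG'.comp ((differentiable_const 0).prodMk differentiable_id)).div_const _ |>.sub
        (hf'.mul_const _))
      (fun y => by linear_combination h2 0 y)
  refine ⟨c, fun x y => ?_⟩
  obtain ⟨k, hk⟩ := exists_eq_mul_of_wronskian_eq (u := fun t => G (t, y)) (c := f y)
    hf' hf0 hF' hfF (hG'.comp (differentiable_id.prodMk (differentiable_const y)))
    (fun x => by linear_combination -h1 x y)
  have hkA : k = A y := by
    simp only [hA, hk 0]
    field_simp [hf0 0]
    ring
  rw [hk x, hkA, hc y]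
  ring

/-- determination of the first-order coefficient `G₁(u,u_{10})` in Case 3
of the classification of two-dimensional scalar Hamiltonian operators of order `(−2,2)`.
Given `f : ℝ → ℝ` continuously differentiable and nowhere vanishing, `F : ℝ → ℝ`
continuously differentiable with `f·F' = a·F` for a constant `a ≠ 0`, and a continuously
differentiable `G : ℝ² → ℝ` satisfying
(i) `a·f(x)·F(x)·f(y) = f(x)·∂₁G(x,y) − f'(x)·G(x,y)` and
(ii) `f(y)·A'(y) − A(y)·f'(y) = a·f(y)·F(y)` where `A(y) := G(x,y)/f(x) − f(y)F(x)`
(independent of `x` by (i)),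
then `G(x,y) = f(x)·f(y)·(F(x) + F(y) + c)` for some constant `c`. -/
theorem second_order_G1_determined (a : ℝ) (ha : a ≠ 0) (f F : ℝ → ℝ)
    (hf : ContDiff ℝ 1 f) (hf0 : ∀ x : ℝ, f x ≠ 0)
    (hF : ContDiff ℝ 1 F) (hfF : ∀ x : ℝ, f x * deriv F x = a * F x)
    (G : ℝ × ℝ → ℝ) (hG : ContDiff ℝ 1 G)
    (h1 : ∀ x y : ℝ,
      a * f x * F x * f y = f x * deriv (fun t => G (t, y)) x - deriv f x * G (x, y))
    (h2 : ∀ x y : ℝ,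
      f y * deriv (fun t => G (x, t) / f x - f t * F x) y
        - (G (x, y) / f x - f y * F x) * deriv f y = a * f y * F y) :
    ∃ c : ℝ, ∀ x y : ℝ, G (x, y) = f x * f y * (F x + F y + c) :=
  second_order_G1_determined_general a f F hf hf0 hF hfF G hG h1 h2
end
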